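/- arXiv:1808.06037 — 6 statements merged into one kernel-verified Lean document; each statement's English description precedes it below -/
import Mathlib

section
/- For all 1 ≤ i, j ≤ n, the entry a_{j, n-i+1} of the n×n sequential matrix is congruent to n · a_{i,j} modulo n²+1. In other words, rotating the sequential matrix 90° clockwise equals multiplying every entry by n modulo n²+1. -/
theorem sequential_matrix_rot90_general (n i j : ℤ) :
    ((n - i + 1) + (j - 1) * n) ≡ n * (j + (i - 1) * n) [ZMOD (n ^ 2 + 1)] :=
  -- the difference of the two sides is exactly `(i - 1) * (n ^ 2 + 1)`
  Int.modEq_iff_dvd.mpr ⟨i - 1, by ring⟩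

theorem sequential_matrix_rot90 (n i j : ℤ) (hn : 1 ≤ n)
    (hi1 : 1 ≤ i) (hin : i ≤ n) (hj1 : 1 ≤ j) (hjn : j ≤ n) :
    ((n - i + 1) + (j - 1) * n) ≡ n * (j + (i - 1) * n) [ZMOD (n ^ 2 + 1)] :=
  sequential_matrix_rot90_general n i j
end

section
/- The entry a_{n-j+1, i} of the n×n sequential matrix is congruent to -n · a_{i,j} modulo n²+1 for all 1 ≤ i,j ≤ n. That is, rotating the sequential matrix 270° clockwise equals multiplying every entry by -n modulo n²+1. -/
theorem sequential_matrix_rot270_general (n i j : ℤ) :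
    (i + (n - j) * n) ≡ -n * (j + (i - 1) * n) [ZMOD (n ^ 2 + 1)] :=
  -- the right side minus the left side is `-i * (n ^ 2 + 1)`
  Int.modEq_iff_dvd.mpr ⟨-i, by ring⟩

theorem sequential_matrix_rot270 (n i j : ℤ) (hn : 1 ≤ n)
    (hi1 : 1 ≤ i) (hin : i ≤ n) (hj1 : 1 ≤ j) (hjn : j ≤ n) :
    (i + (n - j) * n) ≡ -n * (j + (i - 1) * n) [ZMOD (n ^ 2 + 1)] :=
  sequential_matrix_rot270_general n i j
end

section
/- If φ : ℤ/(n²+1)ℤ → {0,1,-1} is a completely multiplicative function, then for all 1 ≤ i,j ≤ n we have φ(a_{j, n-i+1}) = φ(n) · φ(a_{i,j}), where a_{i,j} are entries of the n×n sequential matrix modulo n²+1. -/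
/-! Since `n² ≡ -1 (mod n² + 1)`, multiplying the entry `j + (i - 1) n` by `n` gives
`n j - (i - 1) = (n - i + 1) + (j - 1) n`, the entry at the rotated position; complete
multiplicativity does the rest. -/

theorem ZMod.natCast_sq_eq_neg_one (n : ℕ) : (n : ZMod (n ^ 2 + 1)) ^ 2 = -1 := by
  have h : ((n ^ 2 + 1 : ℕ) : ZMod (n ^ 2 + 1)) = 0 := ZMod.natCast_self _
  push_cast at h
  linear_combination h

theorem rot90_entry_eq_mul {R : Type*} [CommRing R] {x : R} (hx : x ^ 2 = -1) (i j : R) :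
    x - i + 1 + (j - 1) * x = x * (j + (i - 1) * x) := by
  linear_combination (1 - i) * hx

theorem mult_fn_rot90_general (n : ℕ)
    (φ : ZMod (n ^ 2 + 1) → ℤ)
    (hmul : ∀ a b, φ (a * b) = φ a * φ b)
    (i j : ℤ) :
    φ ((((n : ℤ) - i + 1) + (j - 1) * n : ℤ) : ZMod (n ^ 2 + 1)) =
      φ (n : ZMod (n ^ 2 + 1)) * φ (((j + (i - 1) * n : ℤ)) : ZMod (n ^ 2 + 1)) := by
  push_cast
  rw [rot90_entry_eq_mul (ZMod.natCast_sq_eq_neg_one n), hmul]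

theorem mult_fn_rot90 (n : ℕ) (hn : 0 < n)
    (φ : ZMod (n ^ 2 + 1) → ℤ)
    (hmul : ∀ a b, φ (a * b) = φ a * φ b)
    (hone : φ 1 = 1)
    (hrange : ∀ a, φ a = 0 ∨ φ a = 1 ∨ φ a = -1)
    (i j : ℤ) (hi1 : 1 ≤ i) (hin : i ≤ (n : ℤ)) (hj1 : 1 ≤ j) (hjn : j ≤ (n : ℤ)) :
    φ ((((n : ℤ) - i + 1) + (j - 1) * n : ℤ) : ZMod (n ^ 2 + 1)) =
      φ (n : ZMod (n ^ 2 + 1)) * φ (((j + (i - 1) * n : ℤ)) : ZMod (n ^ 2 + 1)) :=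
  mult_fn_rot90_general n φ hmul i j
end

section
/- If n is a positive even integer and m = n²+1, then the Jacobi symbol (n/m) equals (-1)^(n²/4). -/
/-!
Write `m = n² + 1` and `n = 2a`. Every divisor `d` of `n` satisfies `m ≡ 1 (mod d)`, and
`m ≡ 1 (mod 4)`, so by reciprocity `(t/m) = (m/t) = 1` for every odd `t ∣ n`. Only the
factors `2` of `n` can contribute, through `(2/m)`: if `a` is even then `m ≡ 1 (mod 8)` and
`(n/m) = 1`, while if `a` is odd then `m ≡ 5 (mod 8)` and `(n/m) = (2/m)(a/m) = -1`.
This is `(-1)^(a²) = (-1)^(n²/4)`.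
-/

theorem jacobiSym_eq_one_of_odd_of_modEq_one {t b : ℕ} (ht : Odd t) (hb : b % 4 = 1)
    (h : b ≡ 1 [MOD t]) : jacobiSym t b = 1 := by
  rw [jacobiSym.quadratic_reciprocity_one_mod_four' ht hb,
    jacobiSym.mod_left' (Int.natCast_modEq_iff.2 h), Nat.cast_one,
    jacobiSym.one_left]

theorem jacobiSym_two_of_mod_eight_eq_one {b : ℕ} (hb : b % 8 = 1) : jacobiSym 2 b = 1 := by
  rw [jacobiSym.at_two (Nat.odd_iff.2 (by omega)), ZMod.χ₈_nat_mod_eight, hb]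
  rfl

theorem jacobiSym_two_of_mod_eight_eq_five {b : ℕ} (hb : b % 8 = 5) : jacobiSym 2 b = -1 := by
  rw [jacobiSym.at_two (Nat.odd_iff.2 (by omega)), ZMod.χ₈_nat_mod_eight, hb]
  rfl

theorem jacobiSym_eq_one_of_modEq_one {a b : ℕ} (hb : b % 8 = 1) (h : b ≡ 1 [MOD a]) :
    jacobiSym a b = 1 := by
  rcases eq_or_ne a 0 with rfl | ha
  · rw [Nat.modEq_zero_iff.1 h, jacobiSym.one_right]
  obtain ⟨k, t, ht, rfl⟩ := Nat.exists_eq_two_pow_mul_odd ha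
  push_cast
  rw [jacobiSym.mul_left, jacobiSym.pow_left, jacobiSym_two_of_mod_eight_eq_one hb, one_pow,
    one_mul, jacobiSym_eq_one_of_odd_of_modEq_one ht (by omega)
      (Nat.ModEq.of_mul_left _ h)]

theorem sq_add_one_modEq_one {d n : ℕ} (h : d ∣ n) : n ^ 2 + 1 ≡ 1 [MOD d] := by
  simpa using (Nat.modEq_zero_iff_dvd.2 (h.trans (dvd_pow_self n two_ne_zero))).add_right 1

theorem jacobi_n_of_nsq_add_one_general (n : ℕ) (hev : Even n) :
    jacobiSym (n : ℤ) (n ^ 2 + 1) = (-1) ^ (n ^ 2 / 4) := by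
  obtain ⟨a, rfl⟩ := hev.two_dvd
  rw [show (2 * a) ^ 2 / 4 = a ^ 2 by rw [mul_pow]; norm_num]
  rcases Nat.even_or_odd a with ha | ha
  · have h8 : ((2 * a) ^ 2 + 1) % 8 = 1 := by
      obtain ⟨c, rfl⟩ := ha
      rw [show (2 * (c + c)) ^ 2 + 1 = 8 * (2 * c ^ 2) + 1 by ring]
      omega
    rw [jacobiSym_eq_one_of_modEq_one h8 (sq_add_one_modEq_one dvd_rfl),
      (ha.pow_of_ne_zero two_ne_zero).neg_one_pow]
  · have h8 : ((2 * a) ^ 2 + 1) % 8 = 5 := by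
      obtain ⟨c, rfl⟩ := ha
      rw [show (2 * (2 * c + 1)) ^ 2 + 1 = 8 * (2 * c ^ 2 + 2 * c) + 5 by ring]
      omega
    push_cast
    rw [jacobiSym.mul_left, jacobiSym_two_of_mod_eight_eq_five h8,
      jacobiSym_eq_one_of_odd_of_modEq_one ha (by omega)
        (sq_add_one_modEq_one (dvd_mul_left a 2)),
      (ha.pow (n := 2)).neg_one_pow, mul_one]

theorem jacobi_n_of_nsq_add_one (n : ℕ) (hn : 0 < n) (hev : Even n) :
    jacobiSym (n : ℤ) (n ^ 2 + 1) = (-1) ^ (n ^ 2 / 4) :=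
  jacobi_n_of_nsq_add_one_general n hev
end

section
/- Let n be a positive even integer and m = n²+1. For all 1 ≤ i,j ≤ n, the Jacobi symbol of the rotated sequential-matrix entry satisfies (a_{j,n-i+1}/m) = (-1)^(n²/4) · (a_{i,j}/m), where a_{i,j} = j + (i-1)n. -/
/-!
Modulo `m = n ^ 2 + 1` we have `n ^ 2 ≡ -1`, so the rotated entry `(n - i + 1) + (j - 1) n` is
congruent to `n · a_{i,j}`, and the sign is `J(n | m)`. For `n = 2k`, `J(k | 4k² + 1) = 1`
because `4k² + 1 ≡ 1 (mod 4k)` and, by reciprocity, `J(k | ·)` only depends on its argument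
modulo `4k`; the second supplementary law gives `J(2 | 4k² + 1) = (-1) ^ (k²)`.
-/

theorem jacobiSym_natCast_four_mul_add_one (a t : ℕ) : jacobiSym a (4 * a * t + 1) = 1 := by
  rcases Nat.eq_zero_or_pos a with rfl | ha
  · simp
  have hodd : Odd (4 * a * t + 1) := ⟨2 * a * t, by ring⟩
  have hmod : (4 * a * t + 1) % (4 * a) = 1 := by
    rw [Nat.mul_add_mod, Nat.mod_eq_of_lt (by omega)]
  rw [jacobiSym.mod_right' a hodd, hmod, jacobiSym.one_right]

theorem jacobiSym_two_four_mul_add_one (t : ℕ) : jacobiSym 2 (4 * t + 1) = (-1) ^ t := by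
  rw [jacobiSym.at_two ⟨2 * t, by ring⟩, ZMod.χ₈_nat_mod_eight]
  rcases Nat.even_or_odd t with ⟨s, rfl⟩ | ⟨s, rfl⟩
  · rw [show (4 * (s + s) + 1) % 8 = 1 by omega, Even.neg_one_pow ⟨s, rfl⟩]
    rfl
  · rw [show (4 * (2 * s + 1) + 1) % 8 = 5 by omega, Odd.neg_one_pow ⟨s, rfl⟩]
    rfl

theorem jacobiSym_self_sq_add_one {n : ℕ} (hn : Even n) :
    jacobiSym n (n ^ 2 + 1) = (-1) ^ (n ^ 2 / 4) := by
  obtain ⟨k, rfl⟩ := hn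
  have hsq : (k + k) ^ 2 = 4 * k ^ 2 := by ring
  rw [hsq, Nat.mul_div_cancel_left _ (by norm_num),
    show ((k + k : ℕ) : ℤ) = 2 * k by push_cast; ring,
    jacobiSym.mul_left, jacobiSym_two_four_mul_add_one, show 4 * k ^ 2 + 1 = 4 * k * k + 1 by ring,
    jacobiSym_natCast_four_mul_add_one, mul_one]

theorem jacobi_rot90_general (n : ℕ) (hev : Even n)
    (i j : ℤ) :
    jacobiSym (((n : ℤ) - i + 1) + (j - 1) * n) (n ^ 2 + 1) =
      (-1) ^ (n ^ 2 / 4) * jacobiSym (j + (i - 1) * n) (n ^ 2 + 1) := by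
  have hrot : ((n : ℤ) - i + 1) + (j - 1) * n
      = n * (j + (i - 1) * n) + ((n ^ 2 + 1 : ℕ) : ℤ) * (1 - i) := by
    push_cast; ring
  rw [jacobiSym.mod_left, hrot, Int.add_mul_emod_self_left, ← jacobiSym.mod_left,
    jacobiSym.mul_left, jacobiSym_self_sq_add_one hev]

theorem jacobi_rot90 (n : ℕ) (hn : 0 < n) (hev : Even n)
    (i j : ℤ) (hi1 : 1 ≤ i) (hin : i ≤ (n : ℤ)) (hj1 : 1 ≤ j) (hjn : j ≤ (n : ℤ)) :
    jacobiSym (((n : ℤ) - i + 1) + (j - 1) * n) (n ^ 2 + 1) =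
      (-1) ^ (n ^ 2 / 4) * jacobiSym (j + (i - 1) * n) (n ^ 2 + 1) :=
  jacobi_rot90_general n hev i j
end

section
/- Let n be a positive even integer and m = n²+1. The permutation f of ℤ/mℤ given by f(a) = n·a has sign (-1)^(n²/4). -/
/-!
Since `n² ≡ -1 (mod n² + 1)`, the map `f : a ↦ n·a` satisfies `f² = -id` and `f⁴ = id`.
As `n² + 1` is odd, `-a = a` only for `a = 0`, so `0` is the only fixed point of `f` and of `f²`.
Hence all `n²` nonzero residues lie in cycles of length exactly `4`, and the sign of `f` is
`(-1)^(n²/4)`.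
-/

namespace Equiv.Perm

variable {α : Type*} [Fintype α] [DecidableEq α]

theorem two_notMem_cycleType_of_forall_pow_two_apply_eq_self {σ : Perm α}
    (h : ∀ x, (σ ^ 2) x = x → σ x = x) : 2 ∉ σ.cycleType := by
  intro h2
  obtain ⟨c, hc, hcard⟩ := Multiset.mem_map.mp h2
  obtain ⟨x, hx⟩ := (mem_cycleFactorsFinset_iff.mp hc).1.nonempty_support
  rw [Function.comp_apply, cycle_is_cycleOf hx hc] at hcard
  have hx' : σ x ≠ x := mem_support.mp (mem_cycleFactorsFinset_support_le hc hx)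
  have hσ2 : (σ ^ 2) x = x := by
    simpa [hcard] using (σ.pow_mod_card_support_cycleOf_self_apply 2 x).symm
  exact hx' (h x hσ2)

theorem cycleType_eq_replicate_four {σ : Perm α} (h4 : σ ^ 4 = 1) (h2 : 2 ∉ σ.cycleType) :
    σ.cycleType = Multiset.replicate σ.cycleType.card 4 := by
  refine Multiset.eq_replicate.mpr ⟨rfl, fun k hk => ?_⟩
  have hdvd : k ∣ 4 := (dvd_of_mem_cycleType hk).trans (orderOf_dvd_of_pow_eq_one h4)
  have hk2 : 2 ≤ k := two_le_of_mem_cycleType hk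
  have hk4 : k ≤ 4 := Nat.le_of_dvd (by norm_num) hdvd
  interval_cases k
  · exact absurd hk h2
  · norm_num at hdvd
  · rfl

end Equiv.Perm

section SquareRootOfMinusOne

variable {R : Type*} [CommRing R] {u : R} {σ : Equiv.Perm R}

theorem eq_zero_of_sq_mul_eq_self (hu : u ^ 2 = -1) (h2 : IsUnit (2 : R)) {x : R}
    (hx : u ^ 2 * x = x) : x = 0 :=
  h2.mul_right_eq_zero.mp (by linear_combination -hx + x * hu)

theorem eq_zero_of_mul_eq_self (hu : u ^ 2 = -1) (h2 : IsUnit (2 : R)) {x : R}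
    (hx : u * x = x) : x = 0 :=
  eq_zero_of_sq_mul_eq_self hu h2 (by linear_combination (u + 1) * hx)

theorem pow_apply_of_forall_apply_eq_mul (hσ : ∀ x, σ x = u * x) (k : ℕ) (x : R) :
    (σ ^ k) x = u ^ k * x := by
  induction k with
  | zero => simp
  | succ k ih => rw [pow_succ', Equiv.Perm.mul_apply, ih, hσ, pow_succ', mul_assoc]

theorem pow_four_eq_one_of_forall_apply_eq_mul (hu : u ^ 2 = -1) (hσ : ∀ x, σ x = u * x) :
    σ ^ 4 = 1 := by
  ext x
  rw [pow_apply_of_forall_apply_eq_mul hσ, Equiv.Perm.one_apply,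
    show u ^ 4 = (u ^ 2) ^ 2 by ring, hu]
  ring

variable [Fintype R] [DecidableEq R]

theorem card_fixedPoints_of_forall_apply_eq_mul (hu : u ^ 2 = -1) (h2 : IsUnit (2 : R))
    (hσ : ∀ x, σ x = u * x) : Fintype.card (Function.fixedPoints σ) = 1 :=
  Fintype.card_eq_one_iff.mpr ⟨⟨0, by simp [Function.IsFixedPt, hσ]⟩, fun ⟨x, hx⟩ =>
    Subtype.ext (eq_zero_of_mul_eq_self hu h2 ((hσ x).symm.trans hx))⟩

theorem two_notMem_cycleType_of_forall_apply_eq_mul (hu : u ^ 2 = -1) (h2 : IsUnit (2 : R))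
    (hσ : ∀ x, σ x = u * x) : 2 ∉ σ.cycleType :=
  Equiv.Perm.two_notMem_cycleType_of_forall_pow_two_apply_eq_self fun x hx => by
    rw [pow_apply_of_forall_apply_eq_mul hσ] at hx
    rw [eq_zero_of_sq_mul_eq_self hu h2 hx, hσ, mul_zero]

end SquareRootOfMinusOne

theorem ZMod.isUnit_two_of_odd {m : ℕ} (hm : Odd m) : IsUnit (2 : ZMod m) := by
  exact_mod_cast (ZMod.isUnit_iff_coprime 2 m).mpr (Nat.coprime_two_left.mpr hm)

theorem sign_mul_by_n_general (n : ℕ) (hev : Even n)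
    (f : Equiv.Perm (ZMod (n ^ 2 + 1))) (hf : ∀ a, f a = (n : ZMod (n ^ 2 + 1)) * a) :
    Equiv.Perm.sign f = (-1) ^ (n ^ 2 / 4) := by
  have hu := ZMod.natCast_sq_eq_neg_one n
  have h2 : IsUnit (2 : ZMod (n ^ 2 + 1)) :=
    ZMod.isUnit_two_of_odd (hev.pow_of_ne_zero two_ne_zero).add_one
  have hcycle := Equiv.Perm.cycleType_eq_replicate_four
    (pow_four_eq_one_of_forall_apply_eq_mul hu hf)
    (two_notMem_cycleType_of_forall_apply_eq_mul hu h2 hf)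
  rw [Equiv.Perm.sign_of_cycleType_eq_replicate four_pos hcycle, if_neg (by decide),
    card_fixedPoints_of_forall_apply_eq_mul hu h2 hf, ZMod.card, Nat.add_sub_cancel]

theorem sign_mul_by_n (n : ℕ) (hn : 0 < n) (hev : Even n)
    (f : Equiv.Perm (ZMod (n ^ 2 + 1))) (hf : ∀ a, f a = (n : ZMod (n ^ 2 + 1)) * a) :
    Equiv.Perm.sign f = (-1) ^ (n ^ 2 / 4) :=
  sign_mul_by_n_general n hev f hf
end
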